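/- Let c ≥ 1, let F be a group and let R ≤ K be normal subgroups of F. Then the sequence of group homomorphisms induced by the inclusions, 1 → (R ∩ ⟨T_{c+1}(F) ∩ K⟩)/⟨T_{c+1}(F) ∩ R⟩ → (R ∩ γ_{c+1}(F))/⟨T_{c+1}(F) ∩ R⟩ → (K ∩ γ_{c+1}(F))/⟨T_{c+1}(F) ∩ K⟩ → ((K ∩ γ_{c+1}(F))·R)/(⟨T_{c+1}(F) ∩ K⟩·R) → 1, is exact: the first map is injective, the image of each map equals the kernel of the next, and the last map is surjective. -/

import Mathlib

/-!
All four maps are induced by inclusions of subgroups of `F`. For such a map `H₁/N₁ → H₂/N₂`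
with `N₂` normal, the class of `x ∈ H₁` is trivial iff `x ∈ N₂`, and the class of `x ∈ H₂` is
in the image iff `x ∈ H₁N₂`; so exactness reduces to identities between subgroups of `F`.
Writing `T_S = ⟨T_{c+1}(F) ∩ S⟩` and `γ = γ_{c+1}(F)`, these use only `T_R ≤ T_K ≤ γ`,
`T_S ≤ S` and, for exactness at `(K ∩ γ)/T_K`, the Dedekind modular law
`(R ∩ γ)·T_K = (R·T_K) ∩ γ`, valid because `T_K` is normal and contained in `γ`.
-/

open Subgroup
open scoped commutatorElement

/-- `Tset G c` is the set `T_{c+1}(G)` of left-normed commutators of weight `c+1` in `G`: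
`Tset G 0 = G` (weight-one "commutators", i.e. all elements), and
`Tset G (n+1) = {⁅a, g⁆ | a ∈ Tset G n, g ∈ G}`. -/
def Tset (G : Type*) [Group G] : ℕ → Set G
  | 0 => Set.univ
  | n + 1 => {x | ∃ a ∈ Tset G n, ∃ g : G, x = ⁅a, g⁆}

theorem Tset_conj {G : Type*} [Group G] (n : ℕ) {x : G} (hx : x ∈ Tset G n) (g : G) :
    g * x * g⁻¹ ∈ Tset G n := by
  induction n generalizing x with
  | zero => trivial
  | succ n ih =>
      obtain ⟨a, ha, b, rfl⟩ := hx
      exact ⟨g * a * g⁻¹, ih ha, g * b * g⁻¹, conjugate_commutatorElement a b g⟩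

/-- `Tcl c S = ⟨T_{c+1}(G) ∩ S⟩`, the subgroup generated by the left-normed commutators of
weight `c+1` lying in `S`. -/
def Tcl {G : Type*} [Group G] (c : ℕ) (S : Subgroup G) : Subgroup G :=
  Subgroup.closure (Tset G c ∩ (S : Set G))

instance Tcl_normal {G : Type*} [Group G] (c : ℕ) (S : Subgroup G) [hS : S.Normal] :
    (Tcl c S).Normal := by
  constructor
  intro n hn g
  induction hn using Subgroup.closure_induction with
  | mem x hx =>
      exact Subgroup.subset_closure ⟨Tset_conj c hx.1 g, hS.conj_mem x hx.2 g⟩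
  | one => simpa using (Tcl c S).one_mem
  | mul x y _ _ hx hy =>
      have h : g * (x * y) * g⁻¹ = (g * x * g⁻¹) * (g * y * g⁻¹) := by group
      rw [h]; exact mul_mem hx hy
  | inv x _ hx =>
      have h : g * x⁻¹ * g⁻¹ = (g * x * g⁻¹)⁻¹ := by group
      rw [h]; exact inv_mem hx

theorem Tset_subset_lcs {G : Type*} [Group G] (n : ℕ) :
    Tset G n ⊆ ((⊤ : Subgroup G).lowerCentralSeries n : Set G) := by
  induction n with
  | zero => intro x _; simp [Subgroup.lowerCentralSeries_zero]
  | succ n ih =>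
      rintro x ⟨a, ha, b, rfl⟩
      rw [Subgroup.lowerCentralSeries_succ]
      exact Subgroup.commutator_mem_commutator (ih ha) (Subgroup.mem_top b)

theorem Tcl_le {G : Type*} [Group G] (c : ℕ) (S : Subgroup G) : Tcl c S ≤ S :=
  (Subgroup.closure_le S).2 Set.inter_subset_right

theorem Tcl_le_lcs {G : Type*} [Group G] (c : ℕ) (S : Subgroup G) :
    Tcl c S ≤ (⊤ : Subgroup G).lowerCentralSeries c :=
  (Subgroup.closure_le _).2 fun _ hx => Tset_subset_lcs c hx.1

theorem Tcl_mono {G : Type*} [Group G] (c : ℕ) {R K : Subgroup G} (h : R ≤ K) :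
    Tcl c R ≤ Tcl c K :=
  Subgroup.closure_mono (Set.inter_subset_inter_right _ h)

theorem subgroupOf_le_comap_inclusion {F : Type*} [Group F] {A B H₁ H₂ : Subgroup F}
    (hH : H₁ ≤ H₂) (hAB : A ≤ B) :
    A.subgroupOf H₁ ≤ (B.subgroupOf H₂).comap (Subgroup.inclusion hH) := by
  intro x hx
  rw [Subgroup.mem_comap, Subgroup.mem_subgroupOf, Subgroup.coe_inclusion]
  exact hAB (Subgroup.mem_subgroupOf.mp hx)

variable {F : Type*} [Group F]

/-- The map `(R ∩ ⟨T_{c+1}(F) ∩ K⟩)/⟨T_{c+1}(F) ∩ R⟩ → (R ∩ γ_{c+1}(F))/⟨T_{c+1}(F) ∩ R⟩`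
induced by the inclusion (using `⟨T_{c+1}(F) ∩ K⟩ ≤ γ_{c+1}(F)`). -/
def mapET (c : ℕ) (R K : Subgroup F) [R.Normal] [K.Normal] :
    (↥(R ⊓ Tcl c K) ⧸ (Tcl c R).subgroupOf (R ⊓ Tcl c K)) →*
      (↥(R ⊓ (⊤ : Subgroup F).lowerCentralSeries c) ⧸ (Tcl c R).subgroupOf (R ⊓ (⊤ : Subgroup F).lowerCentralSeries c)) :=
  QuotientGroup.map _ _ (Subgroup.inclusion (inf_le_inf_left R (Tcl_le_lcs c K)))
    (subgroupOf_le_comap_inclusion _ le_rfl)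

/-- The map `(R ∩ γ_{c+1}(F))/⟨T_{c+1}(F) ∩ R⟩ → (K ∩ γ_{c+1}(F))/⟨T_{c+1}(F) ∩ K⟩`
induced by the inclusion. -/
def mapRKT (c : ℕ) (R K : Subgroup F) [R.Normal] [K.Normal] (hRK : R ≤ K) :
    (↥(R ⊓ (⊤ : Subgroup F).lowerCentralSeries c) ⧸ (Tcl c R).subgroupOf (R ⊓ (⊤ : Subgroup F).lowerCentralSeries c)) →*
      (↥(K ⊓ (⊤ : Subgroup F).lowerCentralSeries c) ⧸ (Tcl c K).subgroupOf (K ⊓ (⊤ : Subgroup F).lowerCentralSeries c)) :=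
  QuotientGroup.map _ _ (Subgroup.inclusion (inf_le_inf_right _ hRK))
    (subgroupOf_le_comap_inclusion _ (Tcl_mono c hRK))

/-- The map `(K ∩ γ_{c+1}(F))/⟨T_{c+1}(F) ∩ K⟩ → ((K ∩ γ_{c+1}(F))·R)/(⟨T_{c+1}(F) ∩ K⟩·R)`
induced by the inclusion, where the products of normal subgroups are the joins
`(K ⊓ (⊤ : Subgroup F).lowerCentralSeries c) ⊔ R` and `Tcl c K ⊔ R`. -/
def mapQT (c : ℕ) (R K : Subgroup F) [R.Normal] [K.Normal] :
    (↥(K ⊓ (⊤ : Subgroup F).lowerCentralSeries c) ⧸ (Tcl c K).subgroupOf (K ⊓ (⊤ : Subgroup F).lowerCentralSeries c)) →*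
      (↥((K ⊓ (⊤ : Subgroup F).lowerCentralSeries c) ⊔ R) ⧸
        (Tcl c K ⊔ R).subgroupOf ((K ⊓ (⊤ : Subgroup F).lowerCentralSeries c) ⊔ R)) :=
  QuotientGroup.map _ _ (Subgroup.inclusion le_sup_left)
    (subgroupOf_le_comap_inclusion _ le_sup_left)

namespace Subgroup

variable {G : Type*} [Group G]

theorem normal_sup_inf_assoc {A B C : Subgroup G} [A.Normal] (h : A ≤ C) :
    A ⊔ B ⊓ C = (A ⊔ B) ⊓ C :=
  SetLike.coe_injective <| by rw [coe_inf, normal_mul, normal_mul, mul_inf_assoc _ _ _ h]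

variable {H₁ H₂ N₁ N₂ : Subgroup G} [(N₁.subgroupOf H₁).Normal] [(N₂.subgroupOf H₂).Normal]
  {hH : H₁ ≤ H₂} {hN : N₁.subgroupOf H₁ ≤ (N₂.subgroupOf H₂).comap (inclusion hH)}

theorem quotientMap_inclusion_mk_eq_one_iff (x : H₁) :
    QuotientGroup.map _ _ (inclusion hH) hN (x : H₁ ⧸ N₁.subgroupOf H₁) = 1 ↔
      (x : G) ∈ N₂ := by
  rw [QuotientGroup.map_mk, QuotientGroup.eq_one_iff, mem_subgroupOf, coe_inclusion]

theorem quotientMap_inclusion_injective (h : H₁ ⊓ N₂ ≤ N₁) :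
    Function.Injective (QuotientGroup.map _ _ (inclusion hH) hN) := by
  refine (injective_iff_map_eq_one _).mpr fun a ha => ?_
  induction a using QuotientGroup.induction_on with
  | H x =>
    rw [quotientMap_inclusion_mk_eq_one_iff] at ha
    exact (QuotientGroup.eq_one_iff x).mpr (mem_subgroupOf.mpr (h ⟨x.2, ha⟩))

theorem mk_mem_range_quotientMap_inclusion_iff [N₂.Normal] (x : H₂) :
    (x : H₂ ⧸ N₂.subgroupOf H₂) ∈ (QuotientGroup.map _ _ (inclusion hH) hN).range ↔
      (x : G) ∈ H₁ ⊔ N₂ := by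
  rw [mem_sup_of_normal_right]
  constructor
  · rintro ⟨a, ha⟩
    induction a using QuotientGroup.induction_on with
    | H y =>
      rw [QuotientGroup.map_mk, QuotientGroup.eq, mem_subgroupOf] at ha
      exact ⟨y, y.2, _, ha, by simp⟩
  · rintro ⟨y, hy, n, hn, hyn⟩
    refine ⟨(⟨y, hy⟩ : H₁), ?_⟩
    rw [QuotientGroup.map_mk, QuotientGroup.eq, mem_subgroupOf]
    simpa [← hyn] using hn

theorem quotientMap_inclusion_surjective [N₂.Normal] (h : H₂ ≤ H₁ ⊔ N₂) :
    Function.Surjective (QuotientGroup.map _ _ (inclusion hH) hN) := by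
  intro a
  induction a using QuotientGroup.induction_on with
  | H x => exact (mk_mem_range_quotientMap_inclusion_iff x).mpr (h x.2)

theorem range_quotientMap_inclusion_eq_ker [N₂.Normal] {H₃ N₃ : Subgroup G}
    [(N₃.subgroupOf H₃).Normal] {hH' : H₂ ≤ H₃}
    {hN' : N₂.subgroupOf H₂ ≤ (N₃.subgroupOf H₃).comap (inclusion hH')}
    (h : H₂ ⊓ (H₁ ⊔ N₂) = H₂ ⊓ N₃) :
    (QuotientGroup.map _ _ (inclusion hH) hN).range =
      (QuotientGroup.map _ _ (inclusion hH') hN').ker := by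
  ext a
  induction a using QuotientGroup.induction_on with
  | H x =>
    rw [mk_mem_range_quotientMap_inclusion_iff, MonoidHom.mem_ker,
      quotientMap_inclusion_mk_eq_one_iff]
    simpa only [mem_inf, x.2, true_and] using SetLike.ext_iff.mp h (x : G)

end Subgroup

theorem stmt17_general (c : ℕ) (R K : Subgroup F) [R.Normal] [K.Normal] (hRK : R ≤ K) :
    Function.Injective (mapET c R K) ∧
      (mapET c R K).range = (mapRKT c R K hRK).ker ∧
      (mapRKT c R K hRK).range = (mapQT c R K).ker ∧
      Function.Surjective (mapQT c R K) := by
  set γ := (⊤ : Subgroup F).lowerCentralSeries c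
  have exact_at_R : R ⊓ γ ⊓ (R ⊓ Tcl c K ⊔ Tcl c R) = R ⊓ γ ⊓ Tcl c K := by
    rw [sup_eq_left.mpr (le_inf (Tcl_le c R) (Tcl_mono c hRK)),
      inf_eq_right.mpr (inf_le_inf_left R (Tcl_le_lcs c K)), inf_assoc,
      inf_eq_right.mpr (Tcl_le_lcs c K)]
  have exact_at_K : K ⊓ γ ⊓ (R ⊓ γ ⊔ Tcl c K) = K ⊓ γ ⊓ (Tcl c K ⊔ R) := by
    rw [sup_comm, normal_sup_inf_assoc (Tcl_le_lcs c K), ← inf_assoc, inf_right_comm,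
      inf_assoc K, inf_idem]
  exact ⟨quotientMap_inclusion_injective inf_le_right,
    range_quotientMap_inclusion_eq_ker exact_at_R, range_quotientMap_inclusion_eq_ker exact_at_K,
    quotientMap_inclusion_surjective (sup_le_sup_left le_sup_right _)⟩

/-- for `c ≥ 1` and normal subgroups `R ≤ K` of `F`, the sequence
`1 → (R ∩ ⟨T_{c+1}(F) ∩ K⟩)/⟨T_{c+1}(F) ∩ R⟩ → (R ∩ γ_{c+1}(F))/⟨T_{c+1}(F) ∩ R⟩
→ (K ∩ γ_{c+1}(F))/⟨T_{c+1}(F) ∩ K⟩ → ((K ∩ γ_{c+1}(F))·R)/(⟨T_{c+1}(F) ∩ K⟩·R) → 1`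
of homomorphisms induced by the inclusions is exact. -/
theorem stmt17 (c : ℕ) (hc : 1 ≤ c) (R K : Subgroup F) [R.Normal] [K.Normal] (hRK : R ≤ K) :
    Function.Injective (mapET c R K) ∧
      (mapET c R K).range = (mapRKT c R K hRK).ker ∧
      (mapRKT c R K hRK).range = (mapQT c R K).ker ∧
      Function.Surjective (mapQT c R K) :=
  stmt17_general c R K hRK
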